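/- Let (X,d) be a metric space, let a_1,…,a_{n_a} (outlier points), c_1,…,c_{n_c} (clean points), and y_1,…,y_N be points of X with n_a, n_c, N ≥ 1, and set γ = n_a/(n_a+n_c). Let p_a ∈ Δ^{n_a} and p_c ∈ Δ^{n_c} be the uniform vectors on the outlier and clean points respectively, let p_X ∈ Δ^{n_a+n_c} be the uniform vector on all n_a+n_c points (so p_X = γ·p_a + (1−γ)·p_c as a measure), and let q ∈ Δ^N be the uniform vector on y_1,…,y_N. Suppose W(p_a, p_c) = k · W(p_c, q) for some k ≥ 1, where the transport costs use the points indicated. Then for every ρ ≥ 0: W^rob_{ρ,0}(p_X, q) ≤ max(1, 1 + kγ − k·√(2ργ(1−γ))) · W(p_c, q). -/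

import Mathlib

/-! Shift a mass `t ≤ γ` from the outliers to the clean points: the reweighted source
`(γ - t) p_a + (1 - γ + t) p_c` has χ²-divergence `t² / (2γ(1 - γ))` from `p_X`, so it is admissible
for `t = min γ √(2ργ(1 - γ))`. Transporting its clean part directly to `q` and routing its outlier
part through the clean points (gluing of couplings, i.e. the triangle inequality for `W`) costs at
most `(γ - t) (W(p_a, p_c) + W(p_c, q)) + (1 - γ + t) W(p_c, q) = (1 + k (γ - t)) W(p_c, q)`. -/

open Finset

/-- Discrete optimal transport cost between weighted point configurations. -/
noncomputable def discreteW {X : Type*} [MetricSpace X] {M N : ℕ}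
    (x : Fin M → X) (y : Fin N → X) (p : Fin M → ℝ) (q : Fin N → ℝ) : ℝ :=
  sInf { c : ℝ | ∃ π : Fin M → Fin N → ℝ,
    (∀ i j, 0 ≤ π i j) ∧ (∀ i, ∑ j, π i j = p i) ∧ (∀ j, ∑ i, π i j = q j) ∧
    c = ∑ i, ∑ j, π i j * dist (x i) (y j) }

/-- `p` is a probability vector. -/
def IsProbVec {M : ℕ} (p : Fin M → ℝ) : Prop := (∀ i, 0 ≤ p i) ∧ ∑ i, p i = 1

/-- χ²-divergence between probability vectors, with generator f(t) = (t-1)²/2. -/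
noncomputable def chiSqDiv {M : ℕ} (pt p : Fin M → ℝ) : ℝ :=
  ∑ i, p i * ((pt i / p i - 1) ^ 2 / 2)

/-- Robust optimal transport cost with marginal χ²-relaxation budgets ρ₁, ρ₂. -/
noncomputable def robustW {X : Type*} [MetricSpace X] {M N : ℕ}
    (x : Fin M → X) (y : Fin N → X) (p : Fin M → ℝ) (q : Fin N → ℝ) (ρ₁ ρ₂ : ℝ) : ℝ :=
  sInf { c : ℝ | ∃ pt qt, IsProbVec pt ∧ IsProbVec qt ∧
    chiSqDiv pt p ≤ ρ₁ ∧ chiSqDiv qt q ≤ ρ₂ ∧ c = discreteW x y pt qt }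

section Transport

variable {X : Type*} [MetricSpace X] {M N : ℕ}

structure IsTransportPlan (p : Fin M → ℝ) (q : Fin N → ℝ) (π : Fin M → Fin N → ℝ) : Prop where
  nonneg : ∀ i j, 0 ≤ π i j
  sum_row : ∀ i, ∑ j, π i j = p i
  sum_col : ∀ j, ∑ i, π i j = q j

def transportCost (x : Fin M → X) (y : Fin N → X) (π : Fin M → Fin N → ℝ) : ℝ :=
  ∑ i, ∑ j, π i j * dist (x i) (y j)

variable {p : Fin M → ℝ} {q : Fin N → ℝ}

lemma IsTransportPlan.transportCost_nonneg {π : Fin M → Fin N → ℝ} (hπ : IsTransportPlan p q π)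
    (x : Fin M → X) (y : Fin N → X) : 0 ≤ transportCost x y π :=
  sum_nonneg fun i _ => sum_nonneg fun j _ => mul_nonneg (hπ.nonneg i j) dist_nonneg

lemma IsTransportPlan.of_isProbVec (hp : IsProbVec p) (hq : IsProbVec q) :
    IsTransportPlan p q fun i j => p i * q j where
  nonneg i j := mul_nonneg (hp.1 i) (hq.1 j)
  sum_row i := by rw [← mul_sum, hq.2, mul_one]
  sum_col j := by rw [← sum_mul, hp.2, one_mul]

lemma discreteW_eq_sInf_image (x : Fin M → X) (y : Fin N → X) (p : Fin M → ℝ) (q : Fin N → ℝ) :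
    discreteW x y p q = sInf (transportCost x y '' {π | IsTransportPlan p q π}) := by
  unfold discreteW
  congr 1
  ext c
  constructor
  · rintro ⟨π, hπ, hrow, hcol, rfl⟩
    exact ⟨π, ⟨hπ, hrow, hcol⟩, rfl⟩
  · rintro ⟨π, ⟨hπ, hrow, hcol⟩, rfl⟩
    exact ⟨π, hπ, hrow, hcol, rfl⟩

lemma transportCost_image_nonneg (x : Fin M → X) (y : Fin N → X) :
    ∀ c ∈ transportCost x y '' {π | IsTransportPlan p q π}, 0 ≤ c := by
  rintro _ ⟨π, hπ, rfl⟩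
  exact hπ.transportCost_nonneg x y

lemma discreteW_nonneg (x : Fin M → X) (y : Fin N → X) (p : Fin M → ℝ) (q : Fin N → ℝ) :
    0 ≤ discreteW x y p q := by
  rw [discreteW_eq_sInf_image]
  exact Real.sInf_nonneg (transportCost_image_nonneg x y)

lemma discreteW_le_transportCost (x : Fin M → X) (y : Fin N → X) {π : Fin M → Fin N → ℝ}
    (hπ : IsTransportPlan p q π) : discreteW x y p q ≤ transportCost x y π := by
  rw [discreteW_eq_sInf_image]
  exact csInf_le ⟨0, transportCost_image_nonneg x y⟩ ⟨π, hπ, rfl⟩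

lemma exists_transportCost_lt (x : Fin M → X) (y : Fin N → X) (hp : IsProbVec p)
    (hq : IsProbVec q) {ε : ℝ} (hε : 0 < ε) :
    ∃ π, IsTransportPlan p q π ∧ transportCost x y π < discreteW x y p q + ε := by
  rw [discreteW_eq_sInf_image]
  have hne : (transportCost x y '' {π | IsTransportPlan p q π}).Nonempty :=
    ⟨_, _, IsTransportPlan.of_isProbVec hp hq, rfl⟩
  obtain ⟨_, ⟨π, hπ, rfl⟩, hlt⟩ := Real.lt_sInf_add_pos hne hε
  exact ⟨π, hπ, hlt⟩

section Gluing

variable {L : ℕ} {r : Fin L → ℝ} {π : Fin M → Fin L → ℝ} {σ : Fin L → Fin N → ℝ}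

/-- Gluing of couplings: `σ l · / r l` is the conditional law of the target given the
intermediate point `l`. -/
noncomputable def gluePlan (π : Fin M → Fin L → ℝ) (σ : Fin L → Fin N → ℝ) (r : Fin L → ℝ) :
    Fin M → Fin N → ℝ :=
  fun i j => ∑ l, π i l * σ l j / r l

lemma IsTransportPlan.glue (hr : ∀ l, 0 < r l) (hπ : IsTransportPlan p r π)
    (hσ : IsTransportPlan r q σ) : IsTransportPlan p q (gluePlan π σ r) where
  nonneg i j := sum_nonneg fun l _ =>
    div_nonneg (mul_nonneg (hπ.nonneg i l) (hσ.nonneg l j)) (hr l).le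
  sum_row i := by
    simp_rw [gluePlan, mul_div_right_comm]
    rw [sum_comm]
    simp_rw [← mul_sum, hσ.sum_row, div_mul_cancel₀ _ (hr _).ne', hπ.sum_row]
  sum_col j := by
    simp_rw [gluePlan, mul_div_assoc]
    rw [sum_comm]
    simp_rw [← sum_mul, hπ.sum_col, mul_div_cancel₀ _ (hr _).ne', hσ.sum_col]

lemma transportCost_glue_le (x : Fin M → X) (y : Fin L → X) (z : Fin N → X)
    (hr : ∀ l, 0 < r l) (hπ : IsTransportPlan p r π) (hσ : IsTransportPlan r q σ) :
    transportCost x z (gluePlan π σ r) ≤ transportCost x y π + transportCost y z σ := by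
  have hfirst : ∑ i, ∑ l, ∑ j, π i l * σ l j / r l * dist (x i) (y l)
      = transportCost x y π := by
    refine sum_congr rfl fun i _ => sum_congr rfl fun l _ => ?_
    rw [← sum_mul, ← sum_div, ← mul_sum, hσ.sum_row, mul_div_cancel_right₀ _ (hr l).ne']
  have hsecond : ∑ i, ∑ l, ∑ j, π i l * σ l j / r l * dist (y l) (z j)
      = transportCost y z σ := by
    rw [sum_comm]
    refine sum_congr rfl fun l _ => ?_
    rw [sum_comm]
    refine sum_congr rfl fun j _ => ?_
    rw [← sum_mul, ← sum_div, ← sum_mul, hπ.sum_col, mul_div_cancel_left₀ _ (hr l).ne']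
  calc transportCost x z (gluePlan π σ r)
      = ∑ i, ∑ l, ∑ j, π i l * σ l j / r l * dist (x i) (z j) := by
        simp_rw [transportCost, gluePlan, sum_mul]
        exact sum_congr rfl fun i _ => sum_comm
    _ ≤ ∑ i, ∑ l, ∑ j, π i l * σ l j / r l * (dist (x i) (y l) + dist (y l) (z j)) := by
        gcongr with i _ l _ j _
        exacts [div_nonneg (mul_nonneg (hπ.nonneg i l) (hσ.nonneg l j)) (hr l).le,
          dist_triangle _ _ _]
    _ = transportCost x y π + transportCost y z σ := by
        simp_rw [mul_add, sum_add_distrib, hfirst, hsecond]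

theorem discreteW_triangle (x : Fin M → X) (y : Fin L → X) (z : Fin N → X)
    (hp : IsProbVec p) (hr : IsProbVec r) (hr_pos : ∀ l, 0 < r l) (hq : IsProbVec q) :
    discreteW x z p q ≤ discreteW x y p r + discreteW y z r q := by
  refine le_of_forall_pos_lt_add fun ε hε => ?_
  obtain ⟨π, hπ, hπε⟩ := exists_transportCost_lt x y hp hr (half_pos hε)
  obtain ⟨σ, hσ, hσε⟩ := exists_transportCost_lt y z hr hq (half_pos hε)
  calc discreteW x z p q
      ≤ transportCost x y π + transportCost y z σ :=
        (discreteW_le_transportCost x z (hπ.glue hr_pos hσ)).trans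
          (transportCost_glue_le x y z hr_pos hπ hσ)
    _ < discreteW x y p r + discreteW y z r q + ε := by linarith

end Gluing

section Mixture

variable {M' : ℕ} {p' : Fin M' → ℝ} {π : Fin M → Fin N → ℝ} {σ : Fin M' → Fin N → ℝ} {α β : ℝ}

lemma IsTransportPlan.append (hα : 0 ≤ α) (hβ : 0 ≤ β) (hαβ : α + β = 1)
    (hπ : IsTransportPlan p q π) (hσ : IsTransportPlan p' q σ) :
    IsTransportPlan (Fin.append (fun i => α * p i) (fun i => β * p' i)) q
      (Fin.append (fun i j => α * π i j) (fun i j => β * σ i j)) where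
  nonneg := Fin.addCases (fun i j => by simpa using mul_nonneg hα (hπ.nonneg i j))
    (fun i j => by simpa using mul_nonneg hβ (hσ.nonneg i j))
  sum_row := Fin.addCases (fun i => by simp [← mul_sum, hπ.sum_row])
    (fun i => by simp [← mul_sum, hσ.sum_row])
  sum_col j := by
    simp only [Fin.sum_univ_add, Fin.append_left, Fin.append_right, ← mul_sum, hπ.sum_col,
      hσ.sum_col, ← add_mul, hαβ, one_mul]

lemma transportCost_append (x : Fin M → X) (x' : Fin M' → X) (y : Fin N → X) (α β : ℝ)
    (π : Fin M → Fin N → ℝ) (σ : Fin M' → Fin N → ℝ) :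
    transportCost (Fin.append x x') y (Fin.append (fun i j => α * π i j) fun i j => β * σ i j)
      = α * transportCost x y π + β * transportCost x' y σ := by
  simp only [transportCost, Fin.sum_univ_add, Fin.append_left, Fin.append_right, mul_sum,
    mul_assoc]

theorem discreteW_append_le (x : Fin M → X) (x' : Fin M' → X) (y : Fin N → X)
    (hα : 0 ≤ α) (hβ : 0 ≤ β) (hαβ : α + β = 1)
    (hp : IsProbVec p) (hp' : IsProbVec p') (hq : IsProbVec q) :
    discreteW (Fin.append x x') y (Fin.append (fun i => α * p i) fun i => β * p' i) q
      ≤ α * discreteW x y p q + β * discreteW x' y p' q := by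
  refine le_of_forall_pos_le_add fun ε hε => ?_
  obtain ⟨π, hπ, hπε⟩ := exists_transportCost_lt x y hp hq hε
  obtain ⟨σ, hσ, hσε⟩ := exists_transportCost_lt x' y hp' hq hε
  calc _ ≤ α * transportCost x y π + β * transportCost x' y σ := by
        rw [← transportCost_append]
        exact discreteW_le_transportCost _ _ (hπ.append hα hβ hαβ hσ)
    _ ≤ α * discreteW x y p q + β * discreteW x' y p' q + ε := by
        nlinarith [mul_le_mul_of_nonneg_left hπε.le hα, mul_le_mul_of_nonneg_left hσε.le hβ]

end Mixture

end Transport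

lemma isProbVec_uniform {n : ℕ} (hn : 0 < n) : IsProbVec fun _ : Fin n => 1 / (n : ℝ) :=
  ⟨fun _ => by positivity, by simp [field]⟩

lemma IsProbVec.append {M M' : ℕ} {p : Fin M → ℝ} {p' : Fin M' → ℝ} {α β : ℝ} (hα : 0 ≤ α)
    (hβ : 0 ≤ β) (hαβ : α + β = 1) (hp : IsProbVec p) (hp' : IsProbVec p') :
    IsProbVec (Fin.append (fun i => α * p i) fun i => β * p' i) :=
  ⟨Fin.addCases (fun i => by simpa using mul_nonneg hα (hp.1 i))
    (fun i => by simpa using mul_nonneg hβ (hp'.1 i)),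
    by simp [Fin.sum_univ_add, ← mul_sum, hp.2, hp'.2, hαβ]⟩

lemma chiSqDiv_self {n : ℕ} {p : Fin n → ℝ} (hp : ∀ i, p i ≠ 0) : chiSqDiv p p = 0 := by
  simp [chiSqDiv, div_self (hp _)]

lemma chiSqDiv_append_uniform {na nc : ℕ} (hna : 0 < na) (hnc : 0 < nc) (γ t : ℝ)
    (hγ : γ = (na : ℝ) / ((na : ℝ) + nc)) :
    chiSqDiv (Fin.append (fun _ : Fin na => (γ - t) * (1 / (na : ℝ)))
        fun _ : Fin nc => (1 - γ + t) * (1 / (nc : ℝ))) (fun _ => 1 / ((na : ℝ) + nc))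
      = t ^ 2 / (2 * γ * (1 - γ)) := by
  have h1γ : 1 - γ = (nc : ℝ) / ((na : ℝ) + nc) := by rw [hγ]; field_simp; ring
  simp only [chiSqDiv, Fin.sum_univ_add, Fin.append_left, Fin.append_right, sum_const,
    card_univ, Fintype.card_fin, nsmul_eq_mul]
  rw [h1γ, hγ]
  field_simp
  ring

lemma robustW_le_discreteW {X : Type*} [MetricSpace X] {M N : ℕ} (x : Fin M → X) (y : Fin N → X)
    {p pt : Fin M → ℝ} {q qt : Fin N → ℝ} {ρ₁ ρ₂ : ℝ} (hpt : IsProbVec pt) (hqt : IsProbVec qt)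
    (hp : chiSqDiv pt p ≤ ρ₁) (hq : chiSqDiv qt q ≤ ρ₂) :
    robustW x y p q ρ₁ ρ₂ ≤ discreteW x y pt qt :=
  csInf_le ⟨0, by rintro _ ⟨_, _, -, -, -, -, rfl⟩; exact discreteW_nonneg _ _ _ _⟩
    ⟨pt, qt, hpt, hqt, hp, hq, rfl⟩

lemma robustW_outlier_le_of_shift {X : Type*} [MetricSpace X] {na nc N : ℕ}
    (hna : 0 < na) (hnc : 0 < nc) (hN : 0 < N)
    (a : Fin na → X) (c : Fin nc → X) (y : Fin N → X) {k ρ γ t : ℝ}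
    (hγ : γ = (na : ℝ) / ((na : ℝ) + nc))
    (hW : discreteW a c (fun _ => 1 / (na : ℝ)) (fun _ => 1 / (nc : ℝ))
        = k * discreteW c y (fun _ => 1 / (nc : ℝ)) (fun _ => 1 / (N : ℝ)))
    (ht : 0 ≤ t) (htγ : t ≤ γ) (htρ : t ^ 2 ≤ 2 * ρ * γ * (1 - γ)) :
    robustW (Fin.append a c) y (fun _ => 1 / ((na : ℝ) + nc)) (fun _ => 1 / (N : ℝ)) ρ 0
      ≤ (1 + k * (γ - t)) * discreteW c y (fun _ => 1 / (nc : ℝ)) (fun _ => 1 / (N : ℝ)) := by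
  have hna' : (0 : ℝ) < na := by exact_mod_cast hna
  have hnc' : (0 : ℝ) < nc := by exact_mod_cast hnc
  have hγ1 : γ < 1 := by rw [hγ, div_lt_one (by positivity)]; linarith
  have hpa := isProbVec_uniform hna
  have hpc := isProbVec_uniform hnc
  have hq := isProbVec_uniform hN
  have hα : 0 ≤ γ - t := sub_nonneg.2 htγ
  have hβ : 0 ≤ 1 - γ + t := by linarith
  have hαβ : γ - t + (1 - γ + t) = 1 := by ring
  have hχ : chiSqDiv (Fin.append (fun _ : Fin na => (γ - t) * (1 / (na : ℝ)))
      fun _ : Fin nc => (1 - γ + t) * (1 / (nc : ℝ))) (fun _ => 1 / ((na : ℝ) + nc)) ≤ ρ := by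
    have hγ0 : 0 < γ := by rw [hγ]; positivity
    rw [chiSqDiv_append_uniform hna hnc γ t hγ, div_le_iff₀ (by nlinarith)]
    linarith
  calc _ ≤ discreteW (Fin.append a c) y (Fin.append (fun _ : Fin na => (γ - t) * (1 / (na : ℝ)))
          fun _ : Fin nc => (1 - γ + t) * (1 / (nc : ℝ))) (fun _ => 1 / (N : ℝ)) :=
        robustW_le_discreteW _ _ (hpa.append hα hβ hαβ hpc) hq hχ
          (chiSqDiv_self (fun _ => by positivity)).le
    _ ≤ (γ - t) * discreteW a y (fun _ => 1 / (na : ℝ)) (fun _ => 1 / (N : ℝ))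
        + (1 - γ + t) * discreteW c y (fun _ => 1 / (nc : ℝ)) (fun _ => 1 / (N : ℝ)) :=
        discreteW_append_le a c y hα hβ hαβ hpa hpc hq
    _ ≤ (γ - t) * (discreteW a c (fun _ => 1 / (na : ℝ)) (fun _ => 1 / (nc : ℝ))
          + discreteW c y (fun _ => 1 / (nc : ℝ)) (fun _ => 1 / (N : ℝ)))
        + (1 - γ + t) * discreteW c y (fun _ => 1 / (nc : ℝ)) (fun _ => 1 / (N : ℝ)) := by
        gcongr
        exact discreteW_triangle a c y hpa hpc (fun _ => by positivity) hq
    _ = _ := by rw [hW]; ring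

theorem robustW_outlier_bound_general {X : Type*} [MetricSpace X] {na nc N : ℕ}
    (hna : 1 ≤ na) (hnc : 1 ≤ nc) (hN : 1 ≤ N)
    (a : Fin na → X) (c : Fin nc → X) (y : Fin N → X)
    (k ρ : ℝ) (hρ : 0 ≤ ρ)
    (γ : ℝ) (hγ : γ = (na : ℝ) / ((na : ℝ) + nc))
    (hW : discreteW a c (fun _ => 1 / (na : ℝ)) (fun _ => 1 / (nc : ℝ))
        = k * discreteW c y (fun _ => 1 / (nc : ℝ)) (fun _ => 1 / (N : ℝ))) :
    robustW (Fin.append a c) y (fun _ => 1 / ((na : ℝ) + nc)) (fun _ => 1 / (N : ℝ)) ρ 0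
      ≤ max 1 (1 + k * γ - k * Real.sqrt (2 * ρ * γ * (1 - γ)))
        * discreteW c y (fun _ => 1 / (nc : ℝ)) (fun _ => 1 / (N : ℝ)) := by
  have hna' : (0 : ℝ) < na := by exact_mod_cast hna
  have hγ0 : 0 ≤ γ := by rw [hγ]; positivity
  have hγ1 : γ ≤ 1 := by rw [hγ, div_le_one (by positivity)]; simp
  set T := Real.sqrt (2 * ρ * γ * (1 - γ))
  have hT : 0 ≤ T := Real.sqrt_nonneg _
  have hshift := robustW_outlier_le_of_shift hna hnc hN a c y hγ hW (le_min hγ0 hT)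
    (min_le_left γ T) (by
      rw [← Real.sq_sqrt (by positivity : 0 ≤ 2 * ρ * γ * (1 - γ))]
      exact pow_le_pow_left₀ (le_min hγ0 hT) (min_le_right _ _) 2)
  refine hshift.trans (mul_le_mul_of_nonneg_right ?_ (discreteW_nonneg _ _ _ _))
  rcases min_choice γ T with h | h <;> rw [h]
  · simp
  · exact le_of_eq_of_le (by ring) (le_max_right _ _)

theorem robustW_outlier_bound {X : Type*} [MetricSpace X] {na nc N : ℕ}
    (hna : 1 ≤ na) (hnc : 1 ≤ nc) (hN : 1 ≤ N)
    (a : Fin na → X) (c : Fin nc → X) (y : Fin N → X)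
    (k ρ : ℝ) (hk : 1 ≤ k) (hρ : 0 ≤ ρ)
    (γ : ℝ) (hγ : γ = (na : ℝ) / ((na : ℝ) + nc))
    (hW : discreteW a c (fun _ => 1 / (na : ℝ)) (fun _ => 1 / (nc : ℝ))
        = k * discreteW c y (fun _ => 1 / (nc : ℝ)) (fun _ => 1 / (N : ℝ))) :
    robustW (Fin.append a c) y (fun _ => 1 / ((na : ℝ) + nc)) (fun _ => 1 / (N : ℝ)) ρ 0
      ≤ max 1 (1 + k * γ - k * Real.sqrt (2 * ρ * γ * (1 - γ)))
        * discreteW c y (fun _ => 1 / (nc : ℝ)) (fun _ => 1 / (N : ℝ)) :=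
  robustW_outlier_bound_general hna hnc hN a c y k ρ hρ γ hγ hW
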